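/- Let d ≥ 1, let τ ∈ ℂ with τ ≠ 0, let η : Fin d → ℂ be pairwise distinct (injective) with η i ≠ 0 for every i, let m : Fin d → ℕ satisfy m i ≥ 1 for every i, and for each i let weights ω i s ∈ ℂ be given for s ∈ {0, …, m i − 1} with ω i (m i − 1) ≠ 0. Define y : ℕ → ℂ by y(k) = ∑_{i} ∑_{s=0}^{m i − 1} ω i s · ((k : ℂ) · τ)^s / s! · (η i)^k, and let r = ∑_{i} m i. Suppose α : Fin r → ℂ satisfies ∑_{j=0}^{r−1} α j · y(k + j) = − y(k + r) for every k ∈ {0, …, r−1}. Then X^r + ∑_{j=0}^{r−1} (α j) · X^j = ∏_{i} (X − C(η i))^{m i} in ℂ[X]; in particular, every η i is a root of this polynomial of multiplicity exactly m i. -/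

import Mathlib

/-!
Let `S` be the shift on sequences `ℕ → ℂ`; the Hankel equations say that `p(S) y` vanishes at
`k < r`, where `p = X ^ r + ∑ α_j X ^ j`. Write `y k = ∑ i, P_i(k) η_i ^ k` with
`deg P_i = m_i - 1`. Since `(S - η)` sends `P(k) η ^ k` to `η • (ΔP)(k) η ^ k`, with `Δ` the forward difference,
`(S - η_i) ^ m_i` kills the `i`-th summand while `(S - η_i) ^ (m_i - 1)` does not; as coprime
polynomials act injectively on each other's kernels, the annihilator of `y` is generated by
`q = ∏ (X - η_i) ^ m_i`. Now `q(S)` kills `p(S) y`, a sequence with `r = deg q` vanishing initial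
values, so `p(S) y = 0`. Hence `q ∣ p`, and both are monic of degree `r`.
-/

open Finset Polynomial

section Shift

variable {R : Type*} [CommRing R]

variable (R) in
def seqShift : Module.End R (ℕ → R) := LinearMap.funLeft R R (· + 1)

lemma seqShift_pow_apply (j : ℕ) (u : ℕ → R) (k : ℕ) : (seqShift R ^ j) u k = u (k + j) := by
  induction j generalizing u with
  | zero => rfl
  | succ j ih => rw [pow_succ, Module.End.mul_apply, ih]; rfl

lemma aeval_seqShift_apply (p : R[X]) (u : ℕ → R) (k : ℕ) :
    aeval (seqShift R) p u k = ∑ i ∈ range (p.natDegree + 1), p.coeff i * u (k + i) := by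
  simp [aeval_eq_sum_range, seqShift_pow_apply]

lemma eq_zero_of_aeval_seqShift_eq_zero {q : R[X]} (hq : q.Monic) {v : ℕ → R}
    (hqv : aeval (seqShift R) q v = 0) (hv : ∀ k < q.natDegree, v k = 0) : v = 0 := by
  funext k
  induction k using Nat.strong_induction_on with
  | _ k ih =>
    obtain hk | hk := lt_or_ge k q.natDegree
    · exact hv k hk
    obtain ⟨k, rfl⟩ := Nat.exists_eq_add_of_le' hk
    have hrec := congrFun hqv k
    rwa [aeval_seqShift_apply, sum_range_succ, hq.coeff_natDegree, one_mul,
      sum_eq_zero fun i hi => by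
        rw [ih _ (by have := mem_range.1 hi; omega), Pi.zero_apply, mul_zero], zero_add] at hrec

lemma eq_of_monic_of_aeval_seqShift_apply_eq_zero {p q : R[X]} (hp : p.Monic) (hq : q.Monic)
    (hdeg : p.natDegree = q.natDegree) {y : ℕ → R}
    (hann : ∀ u, q ∣ u ↔ aeval (seqShift R) u y = 0)
    (hpy : ∀ k < q.natDegree, aeval (seqShift R) p y k = 0) : p = q := by
  have hpy_all : aeval (seqShift R) p y = 0 := by
    refine eq_zero_of_aeval_seqShift_eq_zero hq ?_ hpy
    rw [← Module.End.mul_apply, ← map_mul, mul_comm, map_mul, Module.End.mul_apply,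
      (hann q).1 dvd_rfl, map_zero]
  exact eq_of_monic_of_dvd_of_natDegree_le hq hp ((hann p).2 hpy_all) hdeg.le

lemma aeval_seqShift_X_sub_C_pow_mul_pow (μ : R) (g : R → R) (j : ℕ) :
    aeval (seqShift R) ((X - C μ) ^ j) (fun k : ℕ => g k * μ ^ k) =
      μ ^ j • fun k : ℕ => ((fwdDiff 1)^[j] g) k * μ ^ k := by
  induction j with
  | zero => simp
  | succ j ih =>
    ext k
    rw [pow_succ', map_mul, Module.End.mul_apply, ih, map_smul, Function.iterate_succ_apply']
    simp only [seqShift, aeval_sub, aeval_X, aeval_C, LinearMap.sub_apply,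
      Module.algebraMap_end_apply, Pi.smul_apply, Pi.sub_apply, LinearMap.funLeft_apply,
      Nat.cast_add, Nat.cast_one, pow_succ, smul_eq_mul, fwdDiff]
    ring

lemma aeval_seqShift_X_sub_C_pow_eval_mul_pow_eq_zero (μ : R) {P : R[X]} {n : ℕ}
    (hP : P.natDegree < n) :
    aeval (seqShift R) ((X - C μ) ^ n) (fun k : ℕ => P.eval (k : R) * μ ^ k) = 0 := by
  rw [aeval_seqShift_X_sub_C_pow_mul_pow μ P.eval, fwdDiff_iter_eq_zero_of_degree_lt hP]
  ext; simp

end Shift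

lemma aeval_apply_eq_zero_of_dvd {R M : Type*} [CommRing R] [AddCommGroup M] [Module R M]
    (f : Module.End R M) {p u : R[X]} (hpu : p ∣ u) {v : M} (hv : aeval f p v = 0) :
    aeval f u v = 0 := by
  obtain ⟨w, rfl⟩ := hpu
  rw [mul_comm, map_mul, Module.End.mul_apply, hv, map_zero]

section Annihilator

variable {K V : Type*} [Field K] [AddCommGroup V] [Module K V] (f : Module.End K V)

-- Write `u = (X - μ)^t * w` with `w` coprime to `X - μ`. Both `w` and `(X - μ)^(n + 1 - t)` kill
-- `(X - μ)^t v`, so it vanishes, which forces `t > n`.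
lemma X_sub_C_pow_dvd_of_aeval_apply_eq_zero {μ : K} {n : ℕ} {v : V}
    (hv : aeval f ((X - C μ) ^ (n + 1)) v = 0) (hv' : aeval f ((X - C μ) ^ n) v ≠ 0)
    {u : K[X]} (hu : aeval f u v = 0) : (X - C μ) ^ (n + 1) ∣ u := by
  rcases eq_or_ne u 0 with rfl | hu0
  · exact dvd_zero _
  obtain ⟨w, hwu, hw⟩ := u.exists_eq_pow_rootMultiplicity_mul_and_not_dvd hu0 μ
  set t := u.rootMultiplicity μ
  by_contra hdvd
  have ht : t ≤ n := by
    by_contra! h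
    exact hdvd (hwu ▸ (pow_dvd_pow _ h).mul_right w)
  set v' := aeval f ((X - C μ) ^ t) v
  have hwv : aeval f w v' = 0 := by
    rw [← Module.End.mul_apply, ← map_mul, mul_comm, ← hwu, hu]
  have hpowv : aeval f ((X - C μ) ^ (n + 1 - t)) v' = 0 := by
    rw [← Module.End.mul_apply, ← map_mul, ← pow_add, Nat.sub_add_cancel (by omega), hv]
  have hcop : IsCoprime w ((X - C μ) ^ (n + 1 - t)) :=
    ((irreducible_X_sub_C μ).coprime_iff_not_dvd.2 hw).symm.pow_right
  have hv'0 : v' = 0 :=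
    Submodule.disjoint_def.1 (disjoint_ker_aeval_of_isCoprime f hcop) v' hwv hpowv
  apply hv'
  rw [← Nat.sub_add_cancel ht, pow_add, map_mul, Module.End.mul_apply]
  exact (congrArg _ hv'0).trans (map_zero _)

lemma prod_X_sub_C_pow_dvd_iff_aeval_sum_eq_zero {ι : Type*} [Fintype ι] [DecidableEq ι]
    {μ : ι → K} (hμ : Function.Injective μ) {m : ι → ℕ} {v : ι → V}
    (hker : ∀ i, aeval f ((X - C (μ i)) ^ (m i + 1)) (v i) = 0)
    (hne : ∀ i, aeval f ((X - C (μ i)) ^ m i) (v i) ≠ 0) (u : K[X]) :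
    ∏ i, (X - C (μ i)) ^ (m i + 1) ∣ u ↔ aeval f u (∑ i, v i) = 0 := by
  constructor
  · intro hu
    rw [map_sum]
    refine sum_eq_zero fun i _ => aeval_apply_eq_zero_of_dvd f (dvd_trans ?_ hu) (hker i)
    exact dvd_prod_of_mem (fun j => (X - C (μ j)) ^ (m j + 1)) (mem_univ i)
  intro hu
  have hcop := (pairwise_coprime_X_sub_C hμ).mono fun i j h => h.pow (m := m i + 1) (n := m j + 1)
  refine prod_dvd_of_coprime (fun i _ j _ hij => hcop hij) fun i _ => ?_
  set g := ∏ j ∈ univ.erase i, (X - C (μ j)) ^ (m j + 1)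
  -- `g` kills every summand but the `i`-th, so `u * g` annihilates `v i`.
  have hg : aeval f g (∑ j, v j) = aeval f g (v i) := by
    rw [map_sum, sum_eq_single i (fun j _ hji => aeval_apply_eq_zero_of_dvd f
      (dvd_prod_of_mem _ (mem_erase.2 ⟨hji, mem_univ j⟩)) (hker j)) (by simp)]
  have hug : aeval f (u * g) (v i) = 0 := by
    rw [map_mul, Module.End.mul_apply, ← hg, ← Module.End.mul_apply, ← map_mul, mul_comm,
      map_mul, Module.End.mul_apply, hu, map_zero]
  exact (IsCoprime.prod_right fun j hj => hcop (ne_of_mem_erase hj).symm).dvd_of_dvd_mul_right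
    (X_sub_C_pow_dvd_of_aeval_apply_eq_zero f (hker i) (hne i) hug)

end Annihilator

section ExpPoly

variable {K : Type*} [Field K] [CharZero K]

lemma aeval_seqShift_X_sub_C_pow_natDegree_eval_mul_pow_ne_zero {μ : K} (hμ : μ ≠ 0) {P : K[X]}
    (hP : P ≠ 0) :
    aeval (seqShift K) ((X - C μ) ^ P.natDegree) (fun k : ℕ => P.eval (k : K) * μ ^ k) ≠ 0 := by
  intro h
  have h0 := congrFun h 0
  rw [aeval_seqShift_X_sub_C_pow_mul_pow μ P.eval, fwdDiff_iter_degree_eq_factorial] at h0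
  simp [hμ, hP, Nat.factorial_ne_zero] at h0

theorem prod_X_sub_C_pow_dvd_iff_aeval_seqShift_eq_zero {ι : Type*} [Fintype ι] [DecidableEq ι]
    {μ : ι → K} (hμ : Function.Injective μ) (hμ0 : ∀ i, μ i ≠ 0) {P : ι → K[X]}
    (hP : ∀ i, P i ≠ 0) (u : K[X]) :
    ∏ i, (X - C (μ i)) ^ ((P i).natDegree + 1) ∣ u ↔
      aeval (seqShift K) u (fun k : ℕ => ∑ i, (P i).eval (k : K) * μ i ^ k) = 0 := by
  simpa only [Finset.sum_fn] using prod_X_sub_C_pow_dvd_iff_aeval_sum_eq_zero (seqShift K) hμ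
    (v := fun i k => (P i).eval (k : K) * μ i ^ k)
    (fun i => aeval_seqShift_X_sub_C_pow_eval_mul_pow_eq_zero _ (Nat.lt_succ_self _))
    (fun i => aeval_seqShift_X_sub_C_pow_natDegree_eval_mul_pow_ne_zero (hμ0 i) (hP i)) u

end ExpPoly

section SumCXPow

variable {R : Type*} [Semiring R] {a : ℕ → R} {n : ℕ}

lemma natDegree_sum_range_C_mul_X_pow (ha : a n ≠ 0) :
    (∑ s ∈ range (n + 1), C (a s) * X ^ s).natDegree = n :=
  natDegree_eq_of_le_of_coeff_ne_zero
    (natDegree_le_iff_coeff_eq_zero.2 fun t ht => by simp [ht.not_ge]) (by simpa using ha)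

lemma sum_range_C_mul_X_pow_ne_zero (ha : a n ≠ 0) :
    ∑ s ∈ range (n + 1), C (a s) * X ^ s ≠ 0 := fun h => ha <| by
  simpa using congrArg (coeff · n) h

end SumCXPow

theorem continuous_time_hankel_system_recovers_polynomial_general
    (d : ℕ) (τ : ℂ) (hτ : τ ≠ 0)
    (η : Fin d → ℂ) (hη : Function.Injective η) (hη0 : ∀ i, η i ≠ 0)
    (m : Fin d → ℕ) (hm : ∀ i, 1 ≤ m i)
    (ω : Fin d → ℕ → ℂ) (hω : ∀ i, ω i (m i - 1) ≠ 0)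
    (y : ℕ → ℂ)
    (hy : ∀ k, y k = ∑ i, ∑ s ∈ Finset.range (m i),
      ω i s * ((k : ℂ) * τ) ^ s / (s.factorial : ℂ) * η i ^ k)
    (r : ℕ) (hr : r = ∑ i, m i)
    (α : Fin r → ℂ)
    (hα : ∀ k < r, ∑ j : Fin r, α j * y (k + (j : ℕ)) = - y (k + r)) :
    (X ^ r + ∑ j : Fin r, C (α j) * X ^ (j : ℕ)) = ∏ i, (X - C (η i)) ^ m i := by
  obtain ⟨n, rfl⟩ : ∃ n : Fin d → ℕ, m = fun i => n i + 1 :=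
    ⟨fun i => m i - 1, funext fun i => (Nat.sub_add_cancel (hm i)).symm⟩
  simp only [Nat.add_sub_cancel] at hω
  set P : Fin d → ℂ[X] := fun i => ∑ s ∈ range (n i + 1), C (ω i s * τ ^ s / s.factorial) * X ^ s
  have hlead : ∀ i, ω i (n i) * τ ^ n i / (n i).factorial ≠ 0 := fun i =>
    div_ne_zero (mul_ne_zero (hω i) (pow_ne_zero _ hτ))
      (Nat.cast_ne_zero.2 (Nat.factorial_ne_zero _))
  have hPdeg : ∀ i, (P i).natDegree = n i := fun i => natDegree_sum_range_C_mul_X_pow (hlead i)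
  have hye : y = fun k : ℕ => ∑ i, (P i).eval (k : ℂ) * η i ^ k := by
    funext k
    simp only [hy, P, eval_finsetSum, sum_mul]
    refine sum_congr rfl fun i _ => sum_congr rfl fun s _ => ?_
    rw [eval_mul, eval_C, eval_pow, eval_X, mul_pow]
    ring
  have hann := prod_X_sub_C_pow_dvd_iff_aeval_seqShift_eq_zero hη hη0 (P := P)
    (fun i => sum_range_C_mul_X_pow_ne_zero (hlead i))
  simp only [hPdeg, ← hye] at hann
  have hqdeg : (∏ i, (X - C (η i)) ^ (n i + 1)).natDegree = r := by
    simp [natDegree_prod_of_monic _ _ fun i _ => (monic_X_sub_C (η i)).pow (n i + 1), hr]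
  refine eq_of_monic_of_aeval_seqShift_apply_eq_zero (monic_X_pow_add (degree_sum_fin_lt α))
    (monic_prod_of_monic _ _ fun i _ => (monic_X_sub_C _).pow _) ?_ hann fun k hk => ?_
  · rw [hqdeg, natDegree_add_eq_left_of_degree_lt (by simpa using degree_sum_fin_lt α),
      natDegree_X_pow]
  · simp only [map_add, map_pow, aeval_X, map_sum, map_mul, aeval_C, LinearMap.add_apply,
      LinearMap.coe_sum, Finset.sum_apply, Module.End.mul_apply, Module.algebraMap_end_apply,
      Pi.add_apply, seqShift_pow_apply, Pi.smul_apply, smul_eq_mul]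
    linear_combination hα k (hqdeg ▸ hk)

theorem continuous_time_hankel_system_recovers_polynomial
    (d : ℕ) (hd : 1 ≤ d) (τ : ℂ) (hτ : τ ≠ 0)
    (η : Fin d → ℂ) (hη : Function.Injective η) (hη0 : ∀ i, η i ≠ 0)
    (m : Fin d → ℕ) (hm : ∀ i, 1 ≤ m i)
    (ω : Fin d → ℕ → ℂ) (hω : ∀ i, ω i (m i - 1) ≠ 0)
    (y : ℕ → ℂ)
    (hy : ∀ k, y k = ∑ i, ∑ s ∈ Finset.range (m i),
      ω i s * ((k : ℂ) * τ) ^ s / (s.factorial : ℂ) * η i ^ k)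
    (r : ℕ) (hr : r = ∑ i, m i)
    (α : Fin r → ℂ)
    (hα : ∀ k < r, ∑ j : Fin r, α j * y (k + (j : ℕ)) = - y (k + r)) :
    (X ^ r + ∑ j : Fin r, C (α j) * X ^ (j : ℕ)) = ∏ i, (X - C (η i)) ^ m i :=
  continuous_time_hankel_system_recovers_polynomial_general d τ hτ η hη hη0 m hm ω hω y hy r hr α hα
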